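/- arXiv:1405.5914 — 8 statements merged into one kernel-verified Lean document; each statement's English description precedes it below -/
import Mathlib

section
/- Let A be a finite-dimensional commutative unital ℂ-algebra and let E be an A-linear endomorphism of A (as an A-module) all of whose eigenvalues are real. Then the Jacobson radical R(A) of A is contained in the sum of the generalized eigenspaces A_λ(E) over those eigenvalues λ with m_E(λ) > 1; that is, R(A) ⊆ ⊕_{λ : m_E(λ) > 1} A_λ(E). -/
/-- Let `A` be a finite-dimensional commutative unital ℂ-algebra and `E`
an `A`-linear endomorphism of `A` all of whose eigenvalues are real. Then the Jacobson
radical of `A` is contained in the sum of the generalized eigenspaces `A_λ(E)` over the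
eigenvalues `λ` with `m_E(λ) > 1`. -/
theorem jacobson_le_sup_genEigenspaces_of_multiplicity_gt_one
    (A : Type*) [CommRing A] [Algebra ℂ A] [FiniteDimensional ℂ A]
    (E : Module.End ℂ A)
    (hAlin : ∀ x y : A, E (x * y) = x * E y)
    (hreal : ∀ μ : ℂ, E.HasEigenvalue μ → μ.im = 0) :
    ∀ x ∈ Ideal.jacobson (⊥ : Ideal A),
      x ∈ ⨆ μ ∈ {μ : ℂ | 1 < Module.finrank ℂ (E.maxGenEigenspace μ)},
        E.maxGenEigenspace μ := by
  classical
  intro x hx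
  -- `x` is nilpotent
  obtain ⟨n, hn⟩ : IsNilpotent x := by
    have : IsArtinianRing A := isArtinian_of_tower ℂ inferInstance
    obtain ⟨n, hn⟩ := IsArtinianRing.isNilpotent_jacobson_bot (R := A)
    refine ⟨n, ?_⟩
    have := Ideal.pow_mem_pow hx n
    rw [hn] at this
    simpa using this
  have hxn : x ^ (n + 1) = 0 := by rw [pow_succ, hn, zero_mul]
  -- powers of `E - μ • 1` are `A`-linear
  have hpow : ∀ (μ : ℂ) (k : ℕ) (a y : A),
      ((E - μ • (1 : Module.End ℂ A)) ^ k) (a * y)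
        = a * (((E - μ • (1 : Module.End ℂ A)) ^ k) y) := by
    intro μ k
    induction k with
    | zero => intro a y; simp
    | succ k ih =>
      intro a y
      have h1 : ∀ b z : A, (E - μ • (1 : Module.End ℂ A)) (b * z)
          = b * ((E - μ • (1 : Module.End ℂ A)) z) := by
        intro b z
        simp only [LinearMap.sub_apply, LinearMap.smul_apply, Module.End.one_apply,
          hAlin, mul_smul_comm, mul_sub]
      rw [pow_succ', Module.End.mul_apply, ih, h1, Module.End.mul_apply]
  -- each generalized eigenspace is an ideal
  have hideal : ∀ (μ : ℂ) (a y : A),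
      y ∈ E.maxGenEigenspace μ → a * y ∈ E.maxGenEigenspace μ := by
    intro μ a y hy
    rw [Module.End.mem_maxGenEigenspace] at hy ⊢
    obtain ⟨k, hk⟩ := hy
    exact ⟨k, by rw [hpow, hk, mul_zero]⟩
  -- cross products vanish
  have hcross : ∀ (μ ν : ℂ), μ ≠ ν → ∀ u v : A,
      u ∈ E.maxGenEigenspace μ → v ∈ E.maxGenEigenspace ν → u * v = 0 := by
    intro μ ν hμν u v hu hv
    have h1 : u * v ∈ E.maxGenEigenspace μ := by
      rw [mul_comm]; exact hideal μ v u hu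
    have h2 : u * v ∈ E.maxGenEigenspace ν := hideal ν u v hv
    have := (E.disjoint_genEigenspace hμν ⊤ ⊤).le_bot ⟨h1, h2⟩
    simpa using this
  -- decompose `1` over the generalized eigenspaces
  obtain ⟨f, hf, hfsum⟩ : ∃ f : ℂ →₀ A, (∀ μ, f μ ∈ E.maxGenEigenspace μ) ∧
      (f.sum fun _ a => a) = 1 := by
    rw [← Submodule.mem_iSup_iff_exists_finsupp]
    rw [Module.End.iSup_maxGenEigenspace_eq_top E]
    trivial
  -- `f μ` acts as identity on the eigenspace for `μ`
  have hid : ∀ (μ : ℂ) (y : A), y ∈ E.maxGenEigenspace μ → f μ * y = y := by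
    intro μ y hy
    have h2 : (f.sum fun _ a => a) * y = y := by rw [hfsum, one_mul]
    rw [Finsupp.sum, Finset.sum_mul] at h2
    have hsum : ∑ ν ∈ f.support, f ν * y = f μ * y := by
      refine Finset.sum_eq_single μ ?_ ?_
      · intro ν _ hν
        exact hcross ν μ hν (f ν) y (hf ν) hy
      · intro hμ
        rw [Finsupp.notMem_support_iff.mp hμ, zero_mul]
    rw [← hsum, h2]
  -- the components `f ν * x` with small eigenspace vanish
  have hsmall : ∀ ν : ℂ, Module.finrank ℂ (E.maxGenEigenspace ν) ≤ 1 → f ν * x = 0 := by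
    intro ν hν
    set e := f ν with he
    have hee : e * e = e := hid ν e (hf ν)
    by_cases h0 : e = 0
    · rw [h0, zero_mul]
    · -- `e` spans the eigenspace
      have hspan : Submodule.span ℂ {e} = E.maxGenEigenspace ν := by
        apply Submodule.eq_of_le_of_finrank_le
        · rw [Submodule.span_singleton_le_iff_mem]; exact hf ν
        · rw [finrank_span_singleton h0]; exact hν
      have hmem : e * x ∈ Submodule.span ℂ {e} := by
        rw [hspan, mul_comm]; exact hideal ν x e (hf ν)
      obtain ⟨c, hc⟩ := Submodule.mem_span_singleton.mp hmem
      have hnil : (e * x) ^ (n + 1) = 0 := by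
        rw [mul_pow, hxn, mul_zero]
      rw [← hc, smul_pow, (IsIdempotentElem.pow_succ_eq n hee : _)] at hnil
      have hc0 : c = 0 := by
        rcases smul_eq_zero.mp hnil with h | h
        · exact pow_eq_zero_iff (Nat.succ_ne_zero n) |>.mp h
        · exact absurd h h0
      rw [← hc, hc0, zero_smul]
  -- conclude
  have hxe : x = ∑ ν ∈ f.support, f ν * x := by
    conv_lhs => rw [← one_mul x, ← hfsum]
    rw [Finsupp.sum, Finset.sum_mul]
  rw [hxe]
  refine Submodule.sum_mem _ fun ν _ => ?_
  by_cases hbig : 1 < Module.finrank ℂ (E.maxGenEigenspace ν)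
  · exact Submodule.mem_iSup_of_mem ν (Submodule.mem_iSup_of_mem hbig
      (hideal ν x (f ν) (hf ν) |> (mul_comm (f ν) x ▸ ·)))
  · rw [hsmall ν (not_lt.mp hbig)]
    exact Submodule.zero_mem _
end

section
/- Let A be a finite-dimensional commutative unital ℂ-algebra and let E be an A-linear endomorphism of A (as an A-module) all of whose eigenvalues are real. If E is semisimple and regular, i.e. E is diagonalizable and every eigenvalue λ of E satisfies m_E(λ) = 1, then the Jacobson radical of A is zero, i.e. A is semisimple. -/
/-- Let `A` be a finite-dimensional commutative unital ℂ-algebra and `E`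
an `A`-linear endomorphism of `A` with real eigenvalues. If `E` is semisimple regular,
i.e. `E` is diagonalizable and every eigenvalue has a one-dimensional generalized
eigenspace, then the Jacobson radical of `A` is zero: `A` is semisimple. -/
theorem semisimple_of_regular_semisimple_alg_linear_endomorphism
    (A : Type*) [CommRing A] [Algebra ℂ A] [FiniteDimensional ℂ A]
    (E : Module.End ℂ A)
    (hAlin : ∀ x y : A, E (x * y) = x * E y)
    (hreal : ∀ μ : ℂ, E.HasEigenvalue μ → μ.im = 0)
    (hdiag : ⨆ μ : ℂ, E.eigenspace μ = ⊤)
    (hreg : ∀ μ : ℂ, E.HasEigenvalue μ → Module.finrank ℂ (E.maxGenEigenspace μ) = 1) :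
    Ideal.jacobson (⊥ : Ideal A) = ⊥ := by
  -- Step 1: every nilpotent element is zero.
  have key : ∀ x : A, IsNilpotent x → x = 0 := by
    intro x ⟨n, hn⟩
    -- multiplication by x kills each eigenspace
    have hker : ∀ μ : ℂ, E.eigenspace μ ≤ LinearMap.ker (LinearMap.mulLeft ℂ x) := by
      intro μ y hy
      rcases eq_or_ne y 0 with rfl | hy0
      · simp
      have hev : E.HasEigenvalue μ := by
        rw [Module.End.hasEigenvalue_iff]
        intro h
        exact hy0 (by simpa [h] using hy)
      -- eigenspace μ has finrank 1
      have hle : E.eigenspace μ ≤ E.maxGenEigenspace μ :=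
        E.genEigenspace_le_maximal μ 1
      have h1 : Module.finrank ℂ (E.eigenspace μ) = 1 := by
        have hub : Module.finrank ℂ (E.eigenspace μ) ≤ 1 := by
          rw [← hreg μ hev]
          exact Submodule.finrank_mono hle
        have hlb : 1 ≤ Module.finrank ℂ (E.eigenspace μ) := by
          have : Nontrivial (E.eigenspace μ) :=
            ⟨⟨⟨y, hy⟩, 0, by simpa using hy0⟩⟩
          exact Module.finrank_pos
        omega
      -- x * y lies in the eigenspace
      have hxy : x * y ∈ E.eigenspace μ := by
        rw [Module.End.mem_eigenspace_iff] at hy ⊢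
        rw [hAlin, hy, mul_smul_comm]
      -- so x * y = c • y for some c
      obtain ⟨c, hc⟩ := (finrank_eq_one_iff_of_nonzero' (⟨y, hy⟩ : E.eigenspace μ)
        (by simpa using hy0)).mp h1 ⟨x * y, hxy⟩
      have hc' : x * y = c • y := by
        have := congrArg (Subtype.val) hc
        simpa using this.symm
      -- iterate: x^k * y = c^k • y
      have hpow : ∀ k : ℕ, x ^ k * y = c ^ k • y := by
        intro k
        induction k with
        | zero => simp
        | succ k ih =>
          rw [pow_succ, pow_succ, mul_assoc, hc', mul_smul_comm, ih, smul_smul, mul_comm]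
      have h0 : (c ^ n) • y = 0 := by rw [← hpow, hn, zero_mul]
      have hcn : c ^ n = 0 := by
        by_contra h
        exact hy0 (by simpa [h] using (smul_eq_zero.mp h0))
      have hc0 : c = 0 := (pow_eq_zero_iff' (n := n)).mp hcn |>.1
      simp only [LinearMap.mem_ker, LinearMap.mulLeft_apply]
      rw [hc', hc0, zero_smul]
    -- hence multiplication by x is zero on all of A
    have htop : LinearMap.ker (LinearMap.mulLeft ℂ x) = ⊤ := by
      rw [← top_le_iff, ← hdiag, iSup_le_iff]
      exact hker
    have := LinearMap.ker_eq_top.mp htop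
    calc x = x * 1 := (mul_one x).symm
    _ = (LinearMap.mulLeft ℂ x) 1 := rfl
    _ = 0 := by rw [this]; rfl
  -- Step 2: the Jacobson radical consists of nilpotents (Artinian ring)
  have : IsArtinianRing A := isArtinian_of_tower ℂ inferInstance
  obtain ⟨n, hn⟩ := IsArtinianRing.isNilpotent_jacobson_bot (R := A)
  refine eq_bot_iff.mpr fun x hx => ?_
  have hxn : x ^ n = 0 := by
    have : x ^ n ∈ (Ideal.jacobson (⊥ : Ideal A)) ^ n := Ideal.pow_mem_pow hx n
    rwa [hn, Ideal.zero_eq_bot, Ideal.mem_bot] at this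
  simpa using key x ⟨n, hxn⟩
end

section
/- Let A be a finite-dimensional commutative unital ℂ-algebra and let E be an A-linear endomorphism of A (as an A-module). For any two distinct scalars λ ≠ μ, the product of the corresponding generalized eigenspaces vanishes: for all x ∈ A_λ(E) and y ∈ A_μ(E) one has x·y = 0. -/
/-- Let `A` be a finite-dimensional commutative unital ℂ-algebra and `E`
an `A`-linear endomorphism of `A`. For distinct scalars `λ ≠ μ`, the product of the
corresponding generalized eigenspaces vanishes: `x ∈ A_λ(E)` and `y ∈ A_μ(E)` imply
`x * y = 0`. -/
theorem genEigenspace_mul_genEigenspace_eq_zero_of_ne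
    (A : Type*) [CommRing A] [Algebra ℂ A] [FiniteDimensional ℂ A]
    (E : Module.End ℂ A)
    (hAlin : ∀ x y : A, E (x * y) = x * E y)
    (lam mu : ℂ) (hne : lam ≠ mu)
    (x y : A) (hx : x ∈ E.maxGenEigenspace lam) (hy : y ∈ E.maxGenEigenspace mu) :
    x * y = 0 := by
  rw [Module.End.mem_maxGenEigenspace] at hx hy
  obtain ⟨k, hk⟩ := hx
  obtain ⟨n, hn⟩ := hy
  set f := E - lam • (1 : Module.End ℂ A) with hfdef
  set g := E - mu • (1 : Module.End ℂ A) with hgdef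
  have hf1 : ∀ a b : A, f (a * b) = f a * b := by
    intro a b
    have hE : E (a * b) = E a * b := by rw [mul_comm a b, hAlin, mul_comm]
    simp [hfdef, hE, sub_mul, smul_mul_assoc]
  have hg1 : ∀ a b : A, g (a * b) = a * g b := by
    intro a b
    simp [hgdef, hAlin a b, mul_sub, mul_smul_comm]
  have hfk : ∀ (m : ℕ) (a b : A), (f ^ m) (a * b) = (f ^ m) a * b := by
    intro m
    induction m with
    | zero => simp
    | succ m ih =>
      intro a b
      rw [pow_succ, Module.End.mul_apply, hf1, ih, Module.End.mul_apply]
  have hgn : ∀ (m : ℕ) (a b : A), (g ^ m) (a * b) = a * (g ^ m) b := by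
    intro m
    induction m with
    | zero => simp
    | succ m ih =>
      intro a b
      rw [pow_succ, Module.End.mul_apply, hg1, ih, Module.End.mul_apply]
  have hP : (f ^ k) (x * y) = 0 := by rw [hfk, hk, zero_mul]
  have hQ : (g ^ n) (x * y) = 0 := by rw [hgn, hn, mul_zero]
  have hcop : IsCoprime ((Polynomial.X - Polynomial.C lam) ^ k)
      ((Polynomial.X - Polynomial.C mu) ^ n) :=
    (Polynomial.isCoprime_X_sub_C_of_isUnit_sub
      ((sub_ne_zero_of_ne hne).isUnit)).pow
  obtain ⟨p, q, hpq⟩ := hcop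
  have haevalf : Polynomial.aeval E ((Polynomial.X - Polynomial.C lam) ^ k) = f ^ k := by
    simp [hfdef, Module.algebraMap_end_eq_smul_id, Module.End.one_eq_id]
  have haevalg : Polynomial.aeval E ((Polynomial.X - Polynomial.C mu) ^ n) = g ^ n := by
    simp [hgdef, Module.algebraMap_end_eq_smul_id, Module.End.one_eq_id]
  have := congrArg (fun r => (Polynomial.aeval E r) (x * y)) hpq
  simpa [haevalf, haevalg, hP, hQ] using this.symm
end

section
/- Let B be a finite-dimensional commutative unital ℝ-algebra and let φ : B → ℝ be an ℝ-linear form with φ(1) = 1 such that the symmetric bilinear form Q(a,b) = φ(ab) is positive definite on B. Then B admits an ℝ-basis (e_1, …, e_n) consisting of pairwise orthogonal idempotents whose sum is 1; that is, e_i² = e_i for all i, e_i·e_j = 0 for i ≠ j, and e_1 + ⋯ + e_n = 1. -/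
/-!
The form `Q(a, b) = φ (a * b)` being positive definite forces `B` to be reduced, so the
Artinian ring `B` is the product of its residue fields. Restricting `φ` to a factor gives a
form of the same kind on that field, which therefore has no square root of `-1`; hence every
residue field is `ℝ`, and the preimages of the standard basis of `ℝⁿ` are the idempotents.
-/

open Module

def PosOnSquares {A : Type*} [Ring A] [Algebra ℝ A] (φ : A →ₗ[ℝ] ℝ) : Prop :=
  ∀ x : A, x ≠ 0 → 0 < φ (x * x)

namespace PosOnSquares

variable {A A' : Type*} [Ring A] [Algebra ℝ A] [Ring A'] [Algebra ℝ A'] {φ : A →ₗ[ℝ] ℝ}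

theorem comp (hφ : PosOnSquares φ) (f : A' →ₗ[ℝ] A) (hf : Function.Injective f)
    (hmul : ∀ x y, f (x * y) = f x * f y) : PosOnSquares (φ ∘ₗ f) := fun x hx => by
  simpa [hmul] using hφ (f x) ((map_ne_zero_iff f hf).mpr hx)

theorem isReduced (hφ : PosOnSquares φ) : IsReduced A := by
  refine (isReduced_iff_pow_one_lt 2 one_lt_two).mpr fun x hx => ?_
  by_contra hx0
  simpa [← sq, hx] using hφ x hx0

theorem mul_self_ne_neg_one [Nontrivial A] (hφ : PosOnSquares φ) (w : A) : w * w ≠ -1 := by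
  intro hw
  have hw0 : w ≠ 0 := by rintro rfl; simp at hw
  have hneg : φ (w * w) = -φ (1 * 1) := by rw [hw, one_mul, map_neg]
  linarith [hφ w hw0, hφ 1 one_ne_zero]

theorem nonempty_algEquiv_real {K : Type*} [Field K] [Algebra ℝ K] [Algebra.IsAlgebraic ℝ K]
    {ψ : K →ₗ[ℝ] ℝ} (hψ : PosOnSquares ψ) : Nonempty (K ≃ₐ[ℝ] ℝ) := by
  rcases Real.nonempty_algEquiv_or K with h | ⟨⟨e⟩⟩
  · exact h
  · refine (hψ.mul_self_ne_neg_one (e.symm Complex.I) ?_).elim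
    rw [← map_mul, Complex.I_mul_I, map_neg, map_one]

end PosOnSquares

theorem exists_algEquiv_fin_real_of_posOnSquares {B : Type*} [CommRing B] [Algebra ℝ B]
    [FiniteDimensional ℝ B] {φ : B →ₗ[ℝ] ℝ} (hφ : PosOnSquares φ) :
    ∃ n : ℕ, Nonempty (B ≃ₐ[ℝ] (Fin n → ℝ)) := by
  classical
  have : IsReduced B := hφ.isReduced
  have : IsArtinianRing B := isArtinian_of_tower ℝ inferInstance
  let ε := (IsArtinianRing.equivPi B).restrictScalars ℝ
  have hfactor (I : MaximalSpectrum B) : Nonempty ((B ⧸ I.asIdeal) ≃ₐ[ℝ] ℝ) := by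
    let := Ideal.Quotient.field I.asIdeal
    refine PosOnSquares.nonempty_algEquiv_real
      (hφ.comp (ε.symm.toLinearMap ∘ₗ LinearMap.single ℝ _ I) ?_ ?_)
    · exact fun x y hxy => Pi.single_injective I (ε.symm.injective hxy)
    · intro x y
      simp [Pi.single_mul]
  exact ⟨_, ⟨ε.trans ((AlgEquiv.piCongrRight fun I => (hfactor I).some).trans
    (AlgEquiv.piCongrLeft' ℝ (fun _ => ℝ) (Finite.equivFin _)))⟩⟩

theorem exists_basis_orthogonal_idempotents_of_algEquiv_pi {R A ι : Type*} [CommSemiring R]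
    [Semiring A] [Algebra R A] [Fintype ι] (e : A ≃ₐ[R] (ι → R)) :
    ∃ b : Basis ι R A, (∀ i, b i * b i = b i) ∧ (∀ i j, i ≠ j → b i * b j = 0) ∧
      ∑ i, b i = 1 := by
  classical
  have hb (i : ι) : (Pi.basisFun R ι).map e.symm.toLinearEquiv i = e.symm (Pi.single i 1) := by
    simp
  refine ⟨(Pi.basisFun R ι).map e.symm.toLinearEquiv, fun i => ?_, fun i j hij => ?_, ?_⟩
  · rw [hb, ← map_mul, ← Pi.single_mul, mul_one]
  · rw [hb, hb, ← map_mul, ← Pi.single_mul_left, Pi.single_eq_of_ne hij, mul_zero,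
      Pi.single_zero, map_zero]
  · simp only [hb, ← map_sum, Finset.univ_sum_single]
    exact map_one e.symm

theorem exists_basis_of_orthogonal_idempotents_general
    (B : Type*) [CommRing B] [Algebra ℝ B] [FiniteDimensional ℝ B]
    (φ : B →ₗ[ℝ] ℝ)
    (hpos : ∀ x : B, x ≠ 0 → 0 < φ (x * x)) :
    ∃ (n : ℕ) (b : Module.Basis (Fin n) ℝ B),
      (∀ i, b i * b i = b i) ∧
      (∀ i j, i ≠ j → b i * b j = 0) ∧
      (∑ i, b i) = 1 := by
  obtain ⟨n, ⟨e⟩⟩ := exists_algEquiv_fin_real_of_posOnSquares hpos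
  exact ⟨n, exists_basis_orthogonal_idempotents_of_algEquiv_pi e⟩

/-- Let `B` be a finite-dimensional commutative unital ℝ-algebra and
`φ : B → ℝ` a linear form with `φ 1 = 1` such that `Q(a,b) = φ (a*b)` is positive
definite. Then `B` admits an ℝ-basis of pairwise orthogonal idempotents summing to `1`. -/
theorem exists_basis_of_orthogonal_idempotents
    (B : Type*) [CommRing B] [Algebra ℝ B] [FiniteDimensional ℝ B]
    (φ : B →ₗ[ℝ] ℝ) (hφ1 : φ 1 = 1)
    (hpos : ∀ x : B, x ≠ 0 → 0 < φ (x * x)) :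
    ∃ (n : ℕ) (b : Module.Basis (Fin n) ℝ B),
      (∀ i, b i * b i = b i) ∧
      (∀ i j, i ≠ j → b i * b j = 0) ∧
      (∑ i, b i) = 1 :=
  exists_basis_of_orthogonal_idempotents_general B φ hpos
end

section
/- Let c ≥ 1 and let A be a finite-dimensional commutative unital ℝ-algebra with a ℤ/cℤ-grading A = ⊕_{k ∈ ℤ/cℤ} A_k (so A_k·A_l ⊆ A_{k+l} and 1 ∈ A_0). Suppose there is an ℝ-linear form φ_0 : A_0 → ℝ with φ_0(1) = 1 such that the bilinear form Q_0(a,b) = φ_0(ab) on A_0 is positive definite. Then for every a ∈ A_1, the Jacobson radical R(A) is contained in the generalized 0-eigenspace of multiplication by a; that is, every x ∈ R(A) satisfies a^n · x = 0 for some n ≥ 0. -/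
/-!
In the Artinian ring `A` the Jacobson radical consists of nilpotent elements, and the homogeneous
components of a nilpotent element are again nilpotent: twisting by a character `ψ` of `ZMod c`
(multiplying the degree-`i` part by `ψ i`) is an algebra map `A → ℂ ⊗ A`, and averaging these
twists against `ψ (-k)` recovers the degree-`k` component. For a nilpotent component `y` of
degree `k`, the element `a ^ m * y` with `m ≡ -k` is nilpotent of degree `0`; but `A₀` is reduced,
since `φ₀ (u * u) > 0` for `u ≠ 0`. Hence a power of `a` kills every component of `x`.
-/

open DirectSum TensorProduct

theorem DirectSum.sum_coe_decompose {ι M σ : Type*} [DecidableEq ι] [Fintype ι] [AddCommMonoid M]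
    [SetLike σ M] [AddSubmonoidClass σ M] (ℳ : ι → σ) [Decomposition ℳ] (x : M) :
    ∑ i, (decompose ℳ x i : M) = x := by
  conv_rhs => rw [← (decompose ℳ).symm_apply_apply x, ← sum_univ_of (decompose ℳ x)]
  simp only [decompose_symm_sum, decompose_symm_of]

namespace GradedAlgebra

variable {K G A : Type*} [Field K] [Algebra K ℂ] [AddCommGroup G] [DecidableEq G] [CommRing A]
  [Algebra K A] (𝒜 : G → Submodule K A) [GradedAlgebra 𝒜] (ψ : AddChar G ℂ)

def twistComponent (i : G) : 𝒜 i →ₗ[K] ℂ ⊗[K] A :=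
  TensorProduct.mk K ℂ A (ψ i) ∘ₗ (𝒜 i).subtype

theorem twistComponent_one :
    twistComponent 𝒜 ψ 0 (GradedMonoid.GOne.one (A := fun i => 𝒜 i)) = 1 := by
  simp [twistComponent, Algebra.TensorProduct.one_def]

theorem twistComponent_mul {i j : G} (ai : 𝒜 i) (aj : 𝒜 j) :
    twistComponent 𝒜 ψ (i + j) (GradedMonoid.GMul.mul (A := fun i => 𝒜 i) ai aj) =
      twistComponent 𝒜 ψ i ai * twistComponent 𝒜 ψ j aj := by
  simp [twistComponent, AddChar.map_add_eq_mul]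

noncomputable def twist : A →ₐ[K] ℂ ⊗[K] A :=
  (toAlgebra K (fun i => 𝒜 i) (twistComponent 𝒜 ψ) (twistComponent_one 𝒜 ψ)
    (twistComponent_mul 𝒜 ψ)).comp (decomposeAlgEquiv 𝒜).toAlgHom

variable {𝒜}

theorem twist_apply_of_mem {i : G} {a : A} (ha : a ∈ 𝒜 i) : twist 𝒜 ψ a = ψ i ⊗ₜ a := by
  simp only [twist, AlgHom.comp_apply, AlgEquiv.coe_toAlgHom, decomposeAlgEquiv_apply,
    decompose_of_mem 𝒜 ha]
  exact toSemiring_of (fun i => (twistComponent 𝒜 ψ i).toAddMonoidHom) (twistComponent_one 𝒜 ψ)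
    (twistComponent_mul 𝒜 ψ) i ⟨a, ha⟩

variable [Fintype G]

theorem twist_apply (x : A) : twist 𝒜 ψ x = ∑ i, ψ i ⊗ₜ (decompose 𝒜 x i : A) := by
  conv_lhs => rw [← sum_coe_decompose 𝒜 x]
  simp only [map_sum, twist_apply_of_mem ψ (decompose 𝒜 x _).2]

theorem sum_smul_twist (x : A) (k : G) :
    ∑ ψ : AddChar G ℂ, ψ (-k) • twist 𝒜 ψ x =
      (Fintype.card G : ℂ) • (1 : ℂ) ⊗ₜ (decompose 𝒜 x k : A) := by
  simp only [twist_apply, Finset.smul_sum, smul_tmul', smul_eq_mul, ← AddChar.map_add_eq_mul]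
  rw [Finset.sum_comm]
  simp only [← sum_tmul, AddChar.sum_apply_eq_ite, neg_add_eq_zero, mul_one]
  simp [ite_tmul]

theorem isNilpotent_decompose {x : A} (hx : IsNilpotent x) (k : G) :
    IsNilpotent (decompose 𝒜 x k : A) := by
  have hsum : IsNilpotent ((Fintype.card G : ℂ) • (1 : ℂ) ⊗ₜ[K] (decompose 𝒜 x k : A)) := by
    rw [← sum_smul_twist]
    exact isNilpotent_sum fun ψ _ => (hx.map (twist 𝒜 ψ)).smul _
  have hcard : (Fintype.card G : ℂ) ≠ 0 := Nat.cast_ne_zero.2 Fintype.card_ne_zero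
  have hk : IsNilpotent (Algebra.TensorProduct.includeRight (R := K) (A := ℂ)
      (decompose 𝒜 x k : A)) := by
    simpa [smul_smul, hcard] using hsum.smul (Fintype.card G : ℂ)⁻¹
  exact (IsNilpotent.map_iff
    (Algebra.TensorProduct.includeRight_injective (algebraMap K ℂ).injective)).1 hk

end GradedAlgebra

theorem Module.End.mem_maxGenEigenspace_mulLeft_zero (R : Type*) {A : Type*} [CommRing R] [Ring A]
    [Algebra R A] (a y : A) :
    y ∈ Module.End.maxGenEigenspace (LinearMap.mulLeft R a) 0 ↔ ∃ n : ℕ, a ^ n * y = 0 := by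
  simp [LinearMap.pow_mulLeft]

theorem isReduced_of_pos_mul_self {B : Type*} [Semiring B] [Module ℝ B] (φ : B →ₗ[ℝ] ℝ)
    (hφ : ∀ x : B, x ≠ 0 → 0 < φ (x * x)) : IsReduced B := by
  refine (isReduced_iff_pow_one_lt 2 one_lt_two).2 fun x hx => ?_
  by_contra hne
  simpa [← sq, hx] using hφ x hne

theorem SetLike.pow_mul_eq_zero_of_isNilpotent {ι σ A : Type*} [AddMonoid ι] [CommSemiring A]
    [SetLike σ A] [AddSubmonoidClass σ A] (𝒜 : ι → σ) [SetLike.GradedMonoid 𝒜]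
    [IsReduced (𝒜 0)] {i j : ι} {a y : A} (ha : a ∈ 𝒜 i) (hy : y ∈ 𝒜 j) (hy_nil : IsNilpotent y)
    {m : ℕ} (hm : m • i + j = 0) : a ^ m * y = 0 := by
  have hmem : a ^ m * y ∈ 𝒜 0 := hm ▸ SetLike.mul_mem_graded (SetLike.pow_mem_graded m ha) hy
  obtain ⟨n, hn⟩ := (Commute.all (a ^ m) y).isNilpotent_mul_left hy_nil
  have : (⟨a ^ m * y, hmem⟩ : 𝒜 0) = 0 := IsReduced.eq_zero _ ⟨n, Subtype.ext hn⟩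
  exact congrArg Subtype.val this

/-- Let `A` be a finite-dimensional commutative unital ℝ-algebra with a
`ℤ/cℤ`-grading (`c ≥ 1`), and suppose the bilinear form `Q₀(a,b) = φ₀(ab)` on `A₀` is
positive definite for some linear form `φ₀` with `φ₀ 1 = 1`. Then for every `a ∈ A₁`,
the Jacobson radical of `A` is contained in the generalized `0`-eigenspace of
multiplication by `a`: every `x` in the radical satisfies `a ^ n * x = 0` for some `n`. -/
theorem jacobson_le_genZeroEigenspace_of_degree_one_element
    (c : ℕ) (hc : 1 ≤ c)
    (A : Type*) [CommRing A] [Algebra ℝ A] [FiniteDimensional ℝ A]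
    (Agr : ZMod c → Submodule ℝ A)
    (hinternal : DirectSum.IsInternal Agr)
    (hone : (1 : A) ∈ Agr 0)
    (hgrmul : ∀ (k l : ZMod c) (x y : A), x ∈ Agr k → y ∈ Agr l → x * y ∈ Agr (k + l))
    (φ0 : Agr 0 →ₗ[ℝ] ℝ)
    (hpos : ∀ (x : A) (hx : x ∈ Agr 0), x ≠ 0 →
      0 < φ0 ⟨x * x, by simpa using hgrmul 0 0 x x hx hx⟩) :
    ∀ a ∈ Agr 1, ∀ x ∈ Ideal.jacobson (⊥ : Ideal A), ∃ n : ℕ, a ^ n * x = 0 := by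
  classical
  intro a ha x hx
  have : NeZero c := ⟨by omega⟩
  let : GradedAlgebra Agr :=
    { hinternal.chooseDecomposition with
      one_mem := hone
      mul_mem := fun k l _ _ => hgrmul k l _ _ }
  have : IsReduced (Agr 0) :=
    isReduced_of_pos_mul_self φ0 fun u hu => hpos u u.2 fun h => hu (Subtype.ext h)
  have : IsArtinianRing A := .of_finite ℝ A
  have hx_nil : IsNilpotent x := by
    rw [IsArtinianRing.jacobson_eq_radical] at hx
    exact mem_nilradical.1 hx
  rw [← Module.End.mem_maxGenEigenspace_mulLeft_zero ℝ, ← sum_coe_decompose Agr x]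
  refine Submodule.sum_mem _ fun k _ => (Module.End.mem_maxGenEigenspace_mulLeft_zero ℝ _ _).2
    ⟨(-k).val, SetLike.pow_mul_eq_zero_of_isNilpotent Agr ha (decompose Agr x k).2
      (GradedAlgebra.isNilpotent_decompose hx_nil k) (by simp)⟩
end

section
/- Let c ≥ 1 and let A be a finite-dimensional commutative unital ℝ-algebra with a ℤ/cℤ-grading A = ⊕_{k ∈ ℤ/cℤ} A_k (so A_k·A_l ⊆ A_{k+l} and 1 ∈ A_0). Suppose there is an ℝ-linear form φ_0 : A_0 → ℝ with φ_0(1) = 1 such that the bilinear form Q_0(a,b) = φ_0(ab) on A_0 is positive definite. If there exists a ∈ A_1 such that multiplication by a is injective on A (i.e. Ker E_a = 0), then A is semisimple (its Jacobson radical is zero). -/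
/-!
Since `E_a` is injective, `a` is a unit, so every degree `k` contains the homogeneous unit `aᵏ`.
Multiplication by these units identifies each `A_k` with `A_0` compatibly with multiplication by
`A_0`, so the trace form `τ x = tr E_x` satisfies `τ (v²) = c · tr (E_v² on A_0) > 0` for
`0 ≠ v ∈ A_0`: `E_v` is symmetric for the inner product `Q_0`. Homogeneous elements of nonzero
degree have trace zero, so `τ x = τ x_0`. If `x` is nilpotent with `x_k ≠ 0`, pick a unit `u` of
degree `-k`; then `x · x_k u²` is nilpotent, hence has trace zero, yet its degree-zero part is
`(x_k u)²` with `x_k u ≠ 0`. So `A` is reduced, and for artinian rings the Jacobson radical is the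
nilradical.
-/

open DirectSum

open LinearMap in
theorem LinearMap.IsSymmetric.trace_comp_self_pos {E : Type*} [NormedAddCommGroup E]
    [InnerProductSpace ℝ E] [FiniteDimensional ℝ E] {T : E →ₗ[ℝ] E} (hT : T.IsSymmetric)
    (h : T ≠ 0) : 0 < trace ℝ E (T ∘ₗ T) := by
  let e := stdOrthonormalBasis ℝ E
  have hsum : trace ℝ E (T ∘ₗ T) = ∑ i, ‖T (e i)‖ ^ 2 := by
    rw [trace_eq_sum_inner _ e]
    refine Finset.sum_congr rfl fun i _ => ?_
    rw [comp_apply, ← hT, real_inner_self_eq_norm_sq]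
  obtain ⟨i, hi⟩ : ∃ i, T (e i) ≠ 0 := by
    by_contra! h0
    exact h (e.toBasis.ext fun i => by simpa using h0 i)
  rw [hsum]
  exact Finset.sum_pos' (fun _ _ => by positivity) ⟨i, Finset.mem_univ _, by positivity⟩

theorem Algebra.trace_mul_self_pos {B : Type*} [CommRing B] [Algebra ℝ B] [FiniteDimensional ℝ B]
    (φ : B →ₗ[ℝ] ℝ) (hφ : ∀ x ≠ 0, 0 < φ (x * x)) {x : B} (hx : x ≠ 0) :
    0 < Algebra.trace ℝ B (x * x) := by
  let core : InnerProductSpace.Core ℝ B :=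
    { inner y z := φ (y * z)
      conj_inner_symm y z := by simp [mul_comm]
      re_inner_nonneg y := by
        rcases eq_or_ne y 0 with rfl | hy
        · simp
        · exact (hφ y hy).le
      add_left y z w := by simp [add_mul]
      smul_left y z r := by simp
      definite y hy := by
        by_contra h
        exact (hφ y h).ne' hy }
  let _ : NormedAddCommGroup B := core.toNormedAddCommGroup
  let _ : InnerProductSpace ℝ B := InnerProductSpace.ofCore core.toCore
  have hsymm : (Algebra.lmul ℝ B x).IsSymmetric := fun y z =>
    show φ (x * y * z) = φ (y * (x * z)) by ring_nf
  have hne : Algebra.lmul ℝ B x ≠ 0 := fun h0 => hx (by simpa using LinearMap.congr_fun h0 1)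
  rw [Algebra.trace_apply, map_mul]
  exact hsymm.trace_comp_self_pos hne

namespace GradedAlgebra

section Field

variable {K ι A : Type*} [Field K] [AddCommGroup ι] [DecidableEq ι] [CommRing A] [Algebra K A]
  (𝒜 : ι → Submodule K A) [GradedAlgebra 𝒜]

theorem mem_neg_of_mul_eq_one {i : ι} {u w : A} (hu : u ∈ 𝒜 i) (huw : u * w = 1) :
    w ∈ 𝒜 (-i) := by
  have h : u * decompose 𝒜 w (-i) = 1 := by
    rw [← coe_decompose_mul_add_of_left_mem 𝒜 hu, huw, add_neg_cancel,
      decompose_of_mem_same 𝒜 SetLike.GradedOne.one_mem]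
  have hw : w = decompose 𝒜 w (-i) :=
    calc w = w * (u * decompose 𝒜 w (-i)) := by rw [h, mul_one]
      _ = decompose 𝒜 w (-i) := by rw [← mul_assoc, mul_comm w, huw, one_mul]
  exact hw ▸ Submodule.coe_mem _

theorem mapsTo_lmul_of_mem_zero (x : 𝒜 0) (i : ι) :
    Set.MapsTo (Algebra.lmul K A x) (𝒜 i) (𝒜 i) := fun y hy => by
  simpa using SetLike.GradedMul.mul_mem x.2 hy

theorem trace_restrict_lmul_eq_trace_gradeZero {i : ι} {u w : A} (hu : u ∈ 𝒜 i)
    (huw : u * w = 1) (x : 𝒜 0) :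
    LinearMap.trace K (𝒜 i) ((Algebra.lmul K A x).restrict (mapsTo_lmul_of_mem_zero 𝒜 x i)) =
      Algebra.trace K (𝒜 0) x := by
  have hw := mem_neg_of_mul_eq_one 𝒜 hu huw
  let e : 𝒜 0 ≃ₗ[K] 𝒜 i := LinearEquiv.ofLinearMap
    ((LinearMap.mulLeft K u).restrict fun y hy => by simpa using SetLike.GradedMul.mul_mem hu hy)
    ((LinearMap.mulLeft K w).restrict fun y hy => by simpa using SetLike.GradedMul.mul_mem hw hy)
    (by ext y; simp [← mul_assoc, huw]) (by ext y; simp [← mul_assoc, mul_comm w u, huw])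
  rw [Algebra.trace_apply, ← LinearMap.trace_conj' _ e]
  congr 1
  ext y
  change (x : A) * y = u * (x * (w * y))
  linear_combination (-(x * y : A)) * huw

variable [FiniteDimensional K A]

theorem trace_eq_zero_of_mem_of_ne_zero {i : ι} (hi : i ≠ 0) {x : A} (hx : x ∈ 𝒜 i) :
    Algebra.trace K A x = 0 := by
  rw [Algebra.trace_apply]
  exact LinearMap.trace_eq_zero_of_mapsTo_ne (Decomposition.isInternal 𝒜) (i + ·)
    (fun j => by simpa using hi) fun _ _ hy => SetLike.GradedMul.mul_mem hx hy

theorem trace_eq_trace_decompose_zero (x : A) :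
    Algebra.trace K A x = Algebra.trace K A (decompose 𝒜 x 0) := by
  classical
  conv_lhs => rw [← sum_support_decompose 𝒜 x]
  rw [map_sum]
  refine Finset.sum_eq_single 0
    (fun i _ hi => trace_eq_zero_of_mem_of_ne_zero 𝒜 hi (Submodule.coe_mem _)) fun h0 => ?_
  rw [DFinsupp.notMem_support_iff.mp h0, ZeroMemClass.coe_zero, map_zero]

theorem trace_eq_card_mul_trace_gradeZero [Fintype ι] (hunit : ∀ i, ∃ u ∈ 𝒜 i, IsUnit u)
    (x : 𝒜 0) : Algebra.trace K A x = Fintype.card ι * Algebra.trace K (𝒜 0) x := by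
  rw [Algebra.trace_apply, LinearMap.trace_eq_sum_trace_restrict (Decomposition.isInternal 𝒜)
    (mapsTo_lmul_of_mem_zero 𝒜 x), ← nsmul_eq_mul, ← Finset.card_univ, ← Finset.sum_const]
  refine Finset.sum_congr rfl fun i _ => ?_
  obtain ⟨u, hu, hu_unit⟩ := hunit i
  obtain ⟨w, huw⟩ := hu_unit.exists_right_inv
  exact trace_restrict_lmul_eq_trace_gradeZero 𝒜 hu huw x

end Field

variable {ι A : Type*} [AddCommGroup ι] [DecidableEq ι] [Fintype ι] [CommRing A] [Algebra ℝ A]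
  [FiniteDimensional ℝ A] (𝒜 : ι → Submodule ℝ A) [GradedAlgebra 𝒜]

theorem trace_mul_self_pos_of_gradeZero (hunit : ∀ i, ∃ u ∈ 𝒜 i, IsUnit u)
    (φ : 𝒜 0 →ₗ[ℝ] ℝ) (hφ : ∀ x : 𝒜 0, x ≠ 0 → 0 < φ (x * x)) {v : 𝒜 0} (hv : v ≠ 0) :
    0 < Algebra.trace ℝ A ((v * v : 𝒜 0) : A) := by
  rw [trace_eq_card_mul_trace_gradeZero 𝒜 hunit]
  exact mul_pos (by exact_mod_cast Fintype.card_pos) (Algebra.trace_mul_self_pos φ hφ hv)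

theorem isReduced_of_forall_exists_isUnit (hunit : ∀ i, ∃ u ∈ 𝒜 i, IsUnit u)
    (φ : 𝒜 0 →ₗ[ℝ] ℝ) (hφ : ∀ x : 𝒜 0, x ≠ 0 → 0 < φ (x * x)) : IsReduced A := by
  refine ⟨fun x hx => ?_⟩
  by_contra hx0
  obtain ⟨k, hk⟩ : ∃ k, decompose 𝒜 x k ≠ 0 := by
    by_contra! h
    exact hx0 ((decompose 𝒜).injective (by ext1 k; simp [h k]))
  obtain ⟨u, hu, hu_unit⟩ := hunit (-k)
  obtain ⟨w, huw⟩ := hu_unit.exists_right_inv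
  let v : 𝒜 0 := ⟨decompose 𝒜 x k * u, by
    simpa using SetLike.GradedMul.mul_mem (decompose 𝒜 x k).2 hu⟩
  have hv : v ≠ 0 := fun hv0 => hk <| Subtype.ext <|
    calc (decompose 𝒜 x k : A) = v * w := by
          change _ = _ * u * w; rw [mul_assoc, huw, mul_one]
      _ = 0 := by rw [hv0, ZeroMemClass.coe_zero, zero_mul]
  have hvu : (v * u : A) ∈ 𝒜 (-k) := by simpa using SetLike.GradedMul.mul_mem v.2 hu
  have hdecomp : (decompose 𝒜 (x * (v * u)) 0 : A) = ((v * v : 𝒜 0) : A) := by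
    have h := coe_decompose_mul_add_of_right_mem 𝒜 (a := x) (i := k) hvu
    rw [add_neg_cancel] at h
    rw [h]
    change _ = _ * u * (_ * u)
    ring
  have htrace : Algebra.trace ℝ A (x * (v * u)) = 0 :=
    (Algebra.isNilpotent_trace_of_isNilpotent ((Commute.all _ _).isNilpotent_mul_right hx)).eq_zero
  rw [trace_eq_trace_decompose_zero 𝒜, hdecomp] at htrace
  exact (trace_mul_self_pos_of_gradeZero 𝒜 hunit φ hφ hv).ne' htrace

end GradedAlgebra

/-- Let `A` be a finite-dimensional commutative unital ℝ-algebra with a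
`ℤ/cℤ`-grading (`c ≥ 1`), and suppose the bilinear form `Q₀(a,b) = φ₀(ab)` on `A₀` is
positive definite for some linear form `φ₀` with `φ₀ 1 = 1`. If there exists `a ∈ A₁`
such that multiplication by `a` is injective on `A`, then `A` is semisimple (its Jacobson
radical is zero). -/
theorem semisimple_of_injective_mul_degree_one_element
    (c : ℕ) (hc : 1 ≤ c)
    (A : Type*) [CommRing A] [Algebra ℝ A] [FiniteDimensional ℝ A]
    (Agr : ZMod c → Submodule ℝ A)
    (hinternal : DirectSum.IsInternal Agr)
    (hone : (1 : A) ∈ Agr 0)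
    (hgrmul : ∀ (k l : ZMod c) (x y : A), x ∈ Agr k → y ∈ Agr l → x * y ∈ Agr (k + l))
    (φ0 : Agr 0 →ₗ[ℝ] ℝ)
    (hpos : ∀ (x : A) (hx : x ∈ Agr 0), x ≠ 0 →
      0 < φ0 ⟨x * x, by simpa using hgrmul 0 0 x x hx hx⟩)
    (a : A) (ha : a ∈ Agr 1)
    (hinj : Function.Injective fun x : A => a * x) :
    Ideal.jacobson (⊥ : Ideal A) = ⊥ := by
  have : NeZero c := ⟨by omega⟩
  let _ : GradedAlgebra Agr :=
    { one_mem := hone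
      mul_mem := hgrmul
      toDecomposition := hinternal.chooseDecomposition }
  have ha_unit : IsUnit a := by
    obtain ⟨b, hb⟩ := (LinearMap.mulLeft ℝ a).injective_iff_surjective.mp hinj 1
    exact IsUnit.of_mul_eq_one b hb
  have hunit : ∀ i, ∃ u ∈ Agr i, IsUnit u := fun i =>
    ⟨a ^ i.val, by simpa using SetLike.pow_mem_graded i.val ha, ha_unit.pow _⟩
  have : IsReduced A := GradedAlgebra.isReduced_of_forall_exists_isUnit Agr hunit φ0
    fun x hx => hpos x x.2 fun h => hx (Subtype.ext h)
  have := IsArtinianRing.of_finite ℝ A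
  rw [IsArtinianRing.jacobson_eq_radical, ← Ideal.zero_eq_bot]
  exact nilradical_eq_zero A
end

section
/- Let c ≥ 1 and let A be a finite-dimensional commutative unital ℝ-algebra with a ℤ/cℤ-grading A = ⊕_{k ∈ ℤ/cℤ} A_k (so A_k·A_l ⊆ A_{k+l} and 1 ∈ A_0). Suppose there is an ℝ-linear form φ_0 : A_0 → ℝ with φ_0(1) = 1 such that the bilinear form Q_0(a,b) = φ_0(ab) on A_0 is positive definite. If there exists a ∈ A_1 such that A_0 = (A_0 ∩ Ker E_a) ⊕ (A_0 ∩ Im E_a), then: the Jacobson radical R(A) is contained in Ker E_a; A = Im E_a ⊕ Ker E_a as ℝ-vector spaces; and the ℝ-subalgebra of A generated by a is semisimple (equivalently, contains no nonzero nilpotent element). -/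
/-!
Positivity of `Q₀` makes `A₀` reduced, hence (being Artinian) von Neumann regular: there is
`w ∈ A₀` with `a^{2c} w = a^c`, so `e = a^c w` is idempotent and `p = a^{c-1} w ∈ A₋₁`
satisfies `a p = e`. The decomposition of `A₀` forces `a (1 - e) = 0`: writing
`1 - e = k + a y`, the element `(1 - e) a y ∈ A₀` is nilpotent since `a^c (1 - e) = 0`, so it
vanishes and `1 - e = (1 - e) k` is killed by `a`. Hence `a p a = a`, which splits
`A = a A ⊕ ann a`.

Averaging over the characters of `ℤ/cℤ` (after complexifying) shows that the homogeneous
components of a nilpotent element are nilpotent. For a nilpotent `x` of degree `k`,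
`p^k x ∈ A₀` vanishes, so `e x = (a p)^{k+1} x = 0`. Therefore `a = a e` kills the radical, and
since `1 - e` sees every element of `ℝ[a]` as a scalar, `ℝ[a]` is reduced.
-/

open DirectSum TensorProduct

lemma isReduced_of_pos_mul_self_s9 {R : Type*} [CommRing R] (φ : R →+ ℝ)
    (hpos : ∀ x : R, x ≠ 0 → 0 < φ (x * x)) : IsReduced R := by
  refine (isReduced_iff_pow_one_lt 2 one_lt_two).mpr fun x hx ↦ ?_
  by_contra hne
  simpa [← sq, hx] using hpos x hne

lemma IsArtinianRing.exists_sq_mul_eq_self {R : Type*} [CommRing R] [IsArtinianRing R]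
    [IsReduced R] (b : R) : ∃ w, b ^ 2 * w = b := by
  obtain ⟨n, y, hy⟩ := IsArtinian.exists_pow_succ_smul_dvd b (1 : R)
  simp only [smul_eq_mul, mul_one, Nat.succ_eq_add_one] at hy
  refine ⟨y, (sub_eq_zero.mp (IsReduced.eq_zero _ ⟨n + 1, ?_⟩)).symm⟩
  rw [show b - b ^ 2 * y = b * (1 - b * y) by ring, mul_pow]
  linear_combination (-(b * (1 - b * y) ^ n)) * hy

lemma isCompl_range_ker_mulLeft {R A : Type*} [CommSemiring R] [CommRing A] [Algebra R A]
    {a p : A} (h : a * p * a = a) :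
    IsCompl (LinearMap.range (LinearMap.mulLeft R a)) (LinearMap.ker (LinearMap.mulLeft R a)) := by
  constructor
  · rw [Submodule.disjoint_def]
    rintro _ ⟨y, rfl⟩ (hy : a * (a * y) = 0)
    show a * y = 0
    linear_combination (-y) * h + p * hy
  · rw [codisjoint_iff, eq_top_iff]
    rintro x -
    refine Submodule.mem_sup.mpr ⟨a * (p * x), ⟨p * x, rfl⟩, x - a * (p * x), ?_, by ring⟩
    show a * (x - a * (p * x)) = 0
    linear_combination (-x) * h

lemma exists_mul_eq_algebraMap_mul_of_mem_adjoin {R A : Type*} [CommSemiring R] [CommSemiring A]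
    [Algebra R A] {a f p : A} (haf : a * f = 0) (hp : p ∈ Algebra.adjoin R {a}) :
    ∃ r : R, p * f = algebraMap R A r * f := by
  induction hp using Algebra.adjoin_induction with
  | mem x hx => exact ⟨0, by rw [Set.mem_singleton_iff.mp hx, haf, map_zero, zero_mul]⟩
  | algebraMap r => exact ⟨r, rfl⟩
  | add x y _ _ hx hy =>
    obtain ⟨r, hr⟩ := hx
    obtain ⟨s, hs⟩ := hy
    exact ⟨r + s, by rw [add_mul, hr, hs, map_add, add_mul]⟩
  | mul x y _ _ hx hy =>
    obtain ⟨r, hr⟩ := hx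
    obtain ⟨s, hs⟩ := hy
    exact ⟨r * s, by rw [mul_assoc, hs, mul_left_comm, hr, map_mul]; ring⟩

lemma eq_zero_of_mem_adjoin_of_isNilpotent {K A : Type*} [Field K] [CommRing A] [Algebra K A]
    {a e p : A} (he : IsIdempotentElem e) (hae : a * (1 - e) = 0)
    (hp : p ∈ Algebra.adjoin K {a}) (hep : e * p = 0) (hnil : IsNilpotent p) : p = 0 := by
  obtain ⟨r, hr⟩ := exists_mul_eq_algebraMap_mul_of_mem_adjoin hae hp
  have hpr : p = algebraMap K A r * (1 - e) := by linear_combination hr + hep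
  by_cases hr0 : r = 0
  · rw [hpr, hr0, map_zero, zero_mul]
  have hf : 1 - e = algebraMap K A r⁻¹ * p := by
    rw [hpr, ← mul_assoc, ← map_mul, inv_mul_cancel₀ hr0, map_one, one_mul]
  have hf0 : 1 - e = 0 :=
    he.one_sub.eq_zero_of_isNilpotent (hf ▸ (Commute.all _ _).isNilpotent_mul_left hnil)
  rw [hpr, hf0, mul_zero]

namespace GradedRing

section

variable {ι : Type*} [AddCommGroup ι] [DecidableEq ι] {A : Type*} [CommRing A] [Algebra ℝ A]
  (𝒜 : ι → Submodule ℝ A) [GradedRing 𝒜]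

theorem eq_zero_of_mem_zero_of_isNilpotent [IsReduced (𝒜 0)] {x : A} (hx : x ∈ 𝒜 0)
    (hnil : IsNilpotent x) : x = 0 := by
  obtain ⟨n, hn⟩ := hnil
  exact congrArg Subtype.val
    (IsReduced.eq_zero (⟨x, hx⟩ : 𝒜 0) ⟨n, Subtype.ext (by simpa using hn)⟩)

lemma mul_eq_zero_of_mem_sup_ker_range [IsReduced (𝒜 0)] {a f : A} (hf : IsIdempotentElem f)
    (hf0 : f ∈ 𝒜 0) (hnil : IsNilpotent (a * f))
    (hsup : f ∈ (𝒜 0 ⊓ LinearMap.ker (LinearMap.mulLeft ℝ a)) ⊔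
      (𝒜 0 ⊓ LinearMap.range (LinearMap.mulLeft ℝ a))) :
    a * f = 0 := by
  obtain ⟨k, ⟨-, hk⟩, _, ⟨hm0, y, rfl⟩, hkm⟩ := Submodule.mem_sup.mp hsup
  replace hk : a * k = 0 := hk
  rw [LinearMap.mulLeft_apply] at hkm hm0
  have hfm : f * (a * y) = 0 := by
    refine eq_zero_of_mem_zero_of_isNilpotent 𝒜 (by simpa using SetLike.mul_mem_graded hf0 hm0) ?_
    rw [mul_left_comm, ← mul_assoc]
    exact (Commute.all _ _).isNilpotent_mul_right hnil
  have hf' : f * f = f := hf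
  linear_combination (-a) * hf' + a * f * hkm.symm + f * hk + a * hfm

noncomputable def twist (ψ : AddChar ι ℂ) : A →+* ℂ ⊗[ℝ] A :=
  (toSemiring
    (fun i ↦ ψ i • (Algebra.TensorProduct.includeRight.toLinearMap ∘ₗ (𝒜 i).subtype).toAddMonoidHom)
    (by simp [SetLike.coe_gOne, Algebra.TensorProduct.one_def])
    (fun x y ↦ by
      simp [SetLike.coe_gMul, AddChar.map_add_eq_mul, smul_mul_smul_comm])).comp
    (decomposeRingEquiv 𝒜).toRingHom

variable [Fintype ι]

lemma twist_apply (ψ : AddChar ι ℂ) (x : A) :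
    twist 𝒜 ψ x = ∑ i, ψ i • ((1 : ℂ) ⊗ₜ[ℝ] (decompose 𝒜 x i : A)) := by
  rw [twist, RingHom.comp_apply]
  change toSemiring _ _ _ (decompose 𝒜 x) = _
  conv_lhs => rw [← sum_univ_of (decompose 𝒜 x), map_sum]
  simp

lemma sum_smul_twist (x : A) (m : ι) :
    ∑ ψ : AddChar ι ℂ, ψ (-m) • twist 𝒜 ψ x
      = (Fintype.card ι : ℂ) • ((1 : ℂ) ⊗ₜ[ℝ] (decompose 𝒜 x m : A)) := by
  simp_rw [twist_apply, Finset.smul_sum, smul_smul, ← AddChar.map_add_eq_mul]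
  rw [Finset.sum_comm]
  simp_rw [← Finset.sum_smul, AddChar.sum_apply_eq_ite, neg_add_eq_sub, sub_eq_zero, ite_smul,
    zero_smul, Finset.sum_ite_eq', Finset.mem_univ, if_true]

theorem isNilpotent_decompose {x : A} (hx : IsNilpotent x) (m : ι) :
    IsNilpotent (decompose 𝒜 x m : A) := by
  have hcard : (Fintype.card ι : ℂ) ≠ 0 := Nat.cast_ne_zero.mpr Fintype.card_ne_zero
  have hsum : IsNilpotent ((Fintype.card ι : ℂ) • ((1 : ℂ) ⊗ₜ[ℝ] (decompose 𝒜 x m : A))) := by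
    rw [← sum_smul_twist]
    exact isNilpotent_sum fun ψ _ ↦ (hx.map (twist 𝒜 ψ)).smul _
  have hincl : IsNilpotent
      (Algebra.TensorProduct.includeRight (R := ℝ) (A := ℂ) (decompose 𝒜 x m : A)) := by
    simpa [smul_smul, hcard] using hsum.smul (Fintype.card ι : ℂ)⁻¹
  exact (IsNilpotent.map_iff
    (Algebra.TensorProduct.includeRight_injective (algebraMap ℝ ℂ).injective)).mp hincl

end

variable {c : ℕ} [NeZero c] {A : Type*} [CommRing A] [Algebra ℝ A] (𝒜 : ZMod c → Submodule ℝ A)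
  [GradedRing 𝒜] [IsReduced (𝒜 0)]

lemma exists_mem_neg_one_isIdempotentElem_mul [IsArtinianRing (𝒜 0)] {a : A} (ha : a ∈ 𝒜 1) :
    ∃ p ∈ 𝒜 (-1), IsIdempotentElem (a * p) ∧ a ^ c * (1 - a * p) = 0 := by
  have hb : a ^ c ∈ 𝒜 0 := by simpa using SetLike.pow_mem_graded c ha
  obtain ⟨⟨w, hw0⟩, hw⟩ := IsArtinianRing.exists_sq_mul_eq_self (⟨a ^ c, hb⟩ : 𝒜 0)
  replace hw : (a ^ c) ^ 2 * w = a ^ c := congrArg Subtype.val hw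
  have hap : a * (a ^ (c - 1) * w) = a ^ c * w := by
    rw [← mul_assoc, ← pow_succ', Nat.sub_add_cancel NeZero.one_le]
  refine ⟨a ^ (c - 1) * w, ?_, ?_, ?_⟩
  · simpa [Nat.cast_sub NeZero.one_le] using
      SetLike.mul_mem_graded (SetLike.pow_mem_graded (c - 1) ha) hw0
  · rw [IsIdempotentElem, hap]
    linear_combination w * hw
  · rw [hap]
    linear_combination -hw

lemma mul_eq_zero_of_isNilpotent {a p : A} (hp : p ∈ 𝒜 (-1)) (he : IsIdempotentElem (a * p))
    {x : A} (hx : IsNilpotent x) : a * p * x = 0 := by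
  classical
  rw [← sum_support_decompose 𝒜 x, Finset.mul_sum]
  refine Finset.sum_eq_zero fun k _ ↦ ?_
  have hpk : p ^ k.val * (decompose 𝒜 x k : A) ∈ 𝒜 0 := by
    have := SetLike.mul_mem_graded (SetLike.pow_mem_graded k.val hp) (decompose 𝒜 x k).2
    rwa [smul_neg, nsmul_one, ZMod.natCast_zmod_val, neg_add_cancel] at this
  have hpk0 : p ^ k.val * (decompose 𝒜 x k : A) = 0 :=
    eq_zero_of_mem_zero_of_isNilpotent 𝒜 hpk
      ((Commute.all _ _).isNilpotent_mul_left (isNilpotent_decompose 𝒜 hx k))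
  calc a * p * (decompose 𝒜 x k : A) = (a * p) ^ (k.val + 1) * (decompose 𝒜 x k : A) := by
        rw [he.pow_succ_eq]
    _ = a * p * a ^ k.val * (p ^ k.val * (decompose 𝒜 x k : A)) := by ring
    _ = 0 := by rw [hpk0, mul_zero]

end GradedRing

open GradedRing in
/-- Let `A` be a finite-dimensional commutative unital ℝ-algebra with a
`ℤ/cℤ`-grading (`c ≥ 1`), and suppose the bilinear form `Q₀(a,b) = φ₀(ab)` on `A₀` is
positive definite for some linear form `φ₀` with `φ₀ 1 = 1`. If there exists `a ∈ A₁`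
with `A₀ = (A₀ ∩ Ker E_a) ⊕ (A₀ ∩ Im E_a)`, then the Jacobson radical of `A` is
contained in `Ker E_a`, `A = Im E_a ⊕ Ker E_a`, and the subalgebra generated by `a` is
semisimple (it contains no nonzero nilpotent element). -/
theorem radical_le_ker_of_degree_one_element_with_decomposition
    (c : ℕ) (hc : 1 ≤ c)
    (A : Type*) [CommRing A] [Algebra ℝ A] [FiniteDimensional ℝ A]
    (Agr : ZMod c → Submodule ℝ A)
    (hinternal : DirectSum.IsInternal Agr)
    (hone : (1 : A) ∈ Agr 0)
    (hgrmul : ∀ (k l : ZMod c) (x y : A), x ∈ Agr k → y ∈ Agr l → x * y ∈ Agr (k + l))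
    (φ0 : Agr 0 →ₗ[ℝ] ℝ)
    (hpos : ∀ (x : A) (hx : x ∈ Agr 0), x ≠ 0 →
      0 < φ0 ⟨x * x, by simpa using hgrmul 0 0 x x hx hx⟩)
    (a : A) (ha : a ∈ Agr 1)
    (hsup : Agr 0 = (Agr 0 ⊓ LinearMap.ker (LinearMap.mulLeft ℝ a)) ⊔
      (Agr 0 ⊓ LinearMap.range (LinearMap.mulLeft ℝ a))) :
    (∀ x ∈ Ideal.jacobson (⊥ : Ideal A), a * x = 0) ∧
    (LinearMap.range (LinearMap.mulLeft ℝ a) ⊔ LinearMap.ker (LinearMap.mulLeft ℝ a) = ⊤ ∧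
      LinearMap.range (LinearMap.mulLeft ℝ a) ⊓ LinearMap.ker (LinearMap.mulLeft ℝ a) = ⊥) ∧
    (∀ x ∈ Algebra.adjoin ℝ ({a} : Set A), IsNilpotent x → x = 0) := by
  have : NeZero c := ⟨by omega⟩
  let _ : GradedRing Agr :=
    { hinternal.chooseDecomposition with
      one_mem := hone
      mul_mem := fun _ _ _ _ hx hy ↦ hgrmul _ _ _ _ hx hy }
  have : IsReduced (Agr 0) := isReduced_of_pos_mul_self_s9 φ0.toAddMonoidHom fun x hx ↦
    hpos x x.2 (by simpa using hx)
  have : IsArtinianRing (Agr 0) := IsArtinianRing.of_finite ℝ (Agr 0)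
  have : IsArtinianRing A := IsArtinianRing.of_finite ℝ A
  obtain ⟨p, hp, he, hbf⟩ := exists_mem_neg_one_isIdempotentElem_mul Agr ha
  have hf0 : 1 - a * p ∈ Agr 0 := sub_mem hone (by simpa using SetLike.mul_mem_graded ha hp)
  have hae : a * (1 - a * p) = 0 := by
    refine mul_eq_zero_of_mem_sup_ker_range Agr he.one_sub hf0 ⟨c, ?_⟩ (hsup ▸ hf0)
    rw [mul_pow, he.one_sub.pow_eq (NeZero.ne c), hbf]
  have hregular : a * p * a = a := by linear_combination -hae
  have hkill : ∀ x, IsNilpotent x → a * p * x = 0 := fun _ ↦ mul_eq_zero_of_isNilpotent Agr hp he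
  have hcompl := isCompl_range_ker_mulLeft (R := ℝ) hregular
  refine ⟨fun x hx ↦ ?_, ⟨hcompl.sup_eq_top, hcompl.inf_eq_bot⟩, fun x hx hnil ↦
    eq_zero_of_mem_adjoin_of_isNilpotent he hae hx (hkill x hnil) hnil⟩
  rw [IsArtinianRing.jacobson_eq_radical] at hx
  linear_combination (-x) * hregular + a * hkill x (mem_nilradical.mp hx)
end

section
/- Let K be a field, let A be a commutative unital K-algebra, let a ∈ A, let c ≥ 1 be an integer, and let P ∈ K[X] be a polynomial with P(0) ≠ 0 such that a^c · P(a^c) = 0 in A. Set b = P(a^c), and suppose that A is finite-dimensional over K and that b can be written as b = a·c' + d with c' ∈ A and d ∈ A satisfying a·d = 0. Then a^i · b = 0 for all integers i ≥ 1. -/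
/-- Let `K` be a field, `A` a finite-dimensional commutative unital
`K`-algebra, `a ∈ A`, `c ≥ 1` an integer and `P ∈ K[X]` a polynomial with `P(0) ≠ 0`
such that `a ^ c * P(a ^ c) = 0`. Set `b = P(a ^ c)` and suppose `b = a * c' + d` with
`a * d = 0`. Then `a ^ i * b = 0` for all `i ≥ 1`. -/
theorem pow_mul_eval_eq_zero
    (K : Type*) [Field K] (A : Type*) [CommRing A] [Algebra K A] [FiniteDimensional K A]
    (a : A) (c : ℕ) (hc : 1 ≤ c) (P : Polynomial K)
    (hP0 : Polynomial.eval (0 : K) P ≠ 0)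
    (hzero : a ^ c * Polynomial.aeval (a ^ c) P = 0)
    (b : A) (hb : b = Polynomial.aeval (a ^ c) P)
    (c' d : A) (hbd : b = a * c' + d) (hd : a * d = 0) :
    ∀ i : ℕ, 1 ≤ i → a ^ i * b = 0 := by
  set Q : A := Polynomial.aeval (a ^ c) P.divX with hQ
  set lam : K := P.coeff 0 with hlam
  have hlam0 : lam ≠ 0 := by
    rwa [hlam, Polynomial.coeff_zero_eq_eval_zero]
  -- decomposition of b
  have hdecomp : b = a ^ c * Q + algebraMap K A lam := by
    conv_lhs => rw [hb, ← Polynomial.X_mul_divX_add P]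
    rw [map_add, map_mul, Polynomial.aeval_X, Polynomial.aeval_C]
  -- a * b = a^2 * c'
  have hab : a * b = a ^ 2 * c' := by
    rw [hbd, mul_add, hd, add_zero, sq, mul_assoc]
  -- lam • a = a^2 * (c' - a^(c-1) * Q)
  have hkey : lam • a = a ^ 2 * (c' - a ^ (c - 1) * Q) := by
    have h1 : a * b = a ^ (c + 1) * Q + lam • a := by
      rw [hdecomp, mul_add, Algebra.smul_def, mul_comm (algebraMap K A lam) a,
        pow_succ, mul_comm (a ^ c) a, mul_assoc]
    have hc1 : c + 1 = 2 + (c - 1) := by omega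
    rw [mul_sub]
    have : a ^ (c + 1) * Q = a ^ 2 * (a ^ (c - 1) * Q) := by
      rw [hc1, pow_add, mul_assoc]
    rw [← this]
    have := h1.symm.trans hab
    linear_combination this
  -- a = a^2 * e
  set e : A := lam⁻¹ • (c' - a ^ (c - 1) * Q) with he
  have hae : a = a ^ 2 * e := by
    rw [he, mul_smul_comm, ← hkey, smul_smul, inv_mul_cancel₀ hlam0, one_smul]
  -- a = a^(n+1) * e^n
  have hpow : ∀ n : ℕ, a = a ^ (n + 1) * e ^ n := by
    intro n
    induction n with
    | zero => simp
    | succ n ih =>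
      calc a = a ^ 2 * e := hae
        _ = (a ^ (n + 1) * e ^ n) * a * e := by rw [← ih]; ring
        _ = a ^ (n + 1 + 1) * e ^ (n + 1) := by ring
  -- a * b = 0
  have habz : a * b = 0 := by
    have h := hpow (c - 1)
    rw [show c - 1 + 1 = c from by omega] at h
    calc a * b = (a ^ c * e ^ (c - 1)) * b := by rw [← h]
      _ = e ^ (c - 1) * (a ^ c * Polynomial.aeval (a ^ c) P) := by rw [← hb]; ring
      _ = 0 := by rw [hzero, mul_zero]
  intro i hi
  obtain ⟨j, rfl⟩ : ∃ j, i = j + 1 := ⟨i - 1, by omega⟩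
  rw [pow_succ, mul_assoc, habz, mul_zero]
end
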